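/- arXiv:1610.05603 — 2 statements merged into one kernel-verified Lean document; each statement's English description precedes it below -/
import Mathlib

section
/- The full join of tables respects deletion of a commonly-fixed column: if t1 and t2 are tables with n+1 columns in which column j is fixed with the same value b in both, and t1', t2' denote the tables obtained by deleting column j, then the full join t1 ⋈ t2 equals the table obtained from t1' ⋈ t2' by re-inserting the constant-b column at position j; moreover t1 ⋈ t2 is (1,0,n+1)-safe if and only if t1' ⋈ t2' is (1,0,n)-safe. -/
/-- XOR-sum of a Boolean row (entries in `ZMod 2`). -/
def xorSum {N : ℕ} (r : Fin N → ZMod 2) : ZMod 2 := ∑ i, r i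

/-- Reduction: keep only the rows with bit `b` at column `j`. -/
def reduce {N : ℕ} (j : Fin N) (b : ZMod 2) (t : Multiset (Fin N → ZMod 2)) :
    Multiset (Fin N → ZMod 2) :=
  t.filter (fun r => r j = b)

/-- `(1,m,N)`-safety: after any `m` reductions, equally many rows XOR-sum to 0 and to 1. -/
def safeB {N : ℕ} : ℕ → Multiset (Fin N → ZMod 2) → Prop
  | 0, t => (t.filter (fun r => xorSum r = 0)).card = (t.filter (fun r => xorSum r = 1)).card
  | m + 1, t => ∀ (j : Fin N) (c : ZMod 2), safeB m (reduce j c t)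

/-- Index of the `j`-th entry of the `i`-th block of size `ℓ`. -/
def blockIdx {N x ℓ : ℕ} (hN : x * ℓ ≤ N) (i : Fin x) (j : Fin ℓ) : Fin N :=
  ⟨i.1 * ℓ + j.1, by
    have h1 : i.1 * ℓ + j.1 < (i.1 + 1) * ℓ := by
      calc i.1 * ℓ + j.1 < i.1 * ℓ + ℓ := Nat.add_lt_add_left j.2 _
        _ = (i.1 + 1) * ℓ := (Nat.succ_mul i.1 ℓ).symm
    exact lt_of_lt_of_le h1 (le_trans (Nat.mul_le_mul i.2 (Nat.le_refl ℓ)) hN)⟩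

/-- XOR-sum of the `i`-th block of `ℓ` entries of a row. -/
def blockSum {N x ℓ : ℕ} (hN : x * ℓ ≤ N) (i : Fin x) (r : Fin N → ZMod 2) : ZMod 2 :=
  ∑ j : Fin ℓ, r (blockIdx hN i j)

/-- The `b`-restriction of `t` w.r.t. block size `ℓ`. -/
def restrict {N x ℓ : ℕ} (hN : x * ℓ ≤ N) (b : Fin x → ZMod 2)
    (t : Multiset (Fin N → ZMod 2)) : Multiset (Fin N → ZMod 2) :=
  t.filter (fun r => ∀ i, blockSum hN i r = b i)

/-- `(x,m,ℓ)`-safety. -/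
def safe {N x ℓ : ℕ} (hN : x * ℓ ≤ N) : ℕ → Multiset (Fin N → ZMod 2) → Prop
  | 0, t => ∀ b b' : Fin x → ZMod 2, (restrict hN b t).card = (restrict hN b' t).card
  | m + 1, t => ∀ (j : Fin N) (c : ZMod 2), safe hN m (reduce j c t)

/-- `Reduces m s t`: `t` is obtained from `s` by `m` reductions. -/
inductive Reduces {N : ℕ} : ℕ → Multiset (Fin N → ZMod 2) → Multiset (Fin N → ZMod 2) → Prop
  | refl (t) : Reduces 0 t t
  | step {m t t'} (j : Fin N) (b : ZMod 2) : Reduces m t t' → Reduces (m + 1) t (reduce j b t')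

/-- Join of two tables matching the last `L` columns of the first table
with the first `L` columns of the second. -/
def join {c1 c2 L : ℕ} (h1 : L ≤ c1) (h2 : L ≤ c2)
    (t1 : Multiset (Fin c1 → ZMod 2)) (t2 : Multiset (Fin c2 → ZMod 2)) :
    Multiset (Fin (c1 + c2 - L) → ZMod 2) :=
  ∑ v : Fin (c1 + c2 - L) → ZMod 2,
    Multiset.replicate
      ((t1.count (fun i : Fin c1 => v ⟨i.1, by have := i.2; omega⟩)) *
       (t2.count (fun i : Fin c2 => v ⟨c1 - L + i.1, by have := i.2; omega⟩))) v

/-- Full join of two tables on all columns. -/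
def fullJoin {N : ℕ} (t1 t2 : Multiset (Fin N → ZMod 2)) : Multiset (Fin N → ZMod 2) :=
  ∑ v : Fin N → ZMod 2, Multiset.replicate (t1.count v * t2.count v) v

/-- Projection to the last `m` columns. -/
def lastProj {N m : ℕ} (h : m ≤ N) (r : Fin N → ZMod 2) : Fin m → ZMod 2 :=
  fun j => r ⟨N - m + j.1, by have := j.2; omega⟩

/-- XOR-sum of the last `m` columns. -/
def lastSum {N m : ℕ} (h : m ≤ N) (r : Fin N → ZMod 2) : ZMod 2 :=
  xorSum (lastProj h r)

/-- Delete column `j` of an (n+1)-column row. -/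
def deleteCol {n : ℕ} (j : Fin (n + 1)) (r : Fin (n + 1) → ZMod 2) : Fin n → ZMod 2 :=
  fun i => r (j.succAbove i)


/-
Deleting the fixed column `j` is undone by re-inserting `b`, so both tables are images of their
deleted versions under the injective map `Fin.insertNth j b`, and full joins commute with injective
maps. Inserting a constant column adds `b` to every XOR-sum, so it only permutes (for `b = 1`,
swaps) the two classes counted by `(1,0,·)`-safety.
-/

lemma count_fullJoin {N : ℕ} (t1 t2 : Multiset (Fin N → ZMod 2)) (v : Fin N → ZMod 2) :
    (fullJoin t1 t2).count v = t1.count v * t2.count v := by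
  rw [fullJoin, Multiset.count_sum']
  simp [Multiset.count_replicate]

lemma fullJoin_map_of_injective {M N : ℕ} {f : (Fin M → ZMod 2) → Fin N → ZMod 2}
    (hf : Function.Injective f) (t1 t2 : Multiset (Fin M → ZMod 2)) :
    fullJoin (t1.map f) (t2.map f) = (fullJoin t1 t2).map f := by
  ext w
  rw [count_fullJoin]
  by_cases hw : w ∈ Set.range f
  · obtain ⟨v, rfl⟩ := hw
    simp only [Multiset.count_map_eq_count' f _ hf, count_fullJoin]
  · have hzero : ∀ t : Multiset (Fin M → ZMod 2), (t.map f).count w = 0 := fun t =>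
      Multiset.count_eq_zero.mpr fun hmem =>
        hw (by obtain ⟨v, -, rfl⟩ := Multiset.mem_map.mp hmem; exact ⟨v, rfl⟩)
    rw [hzero, hzero, hzero, zero_mul]

lemma map_insertNth_map_deleteCol {n : ℕ} (j : Fin (n + 1)) (b : ZMod 2)
    (t : Multiset (Fin (n + 1) → ZMod 2)) (h : ∀ r ∈ t, r j = b) :
    (t.map (deleteCol j)).map (fun r => j.insertNth b r) = t := by
  rw [Multiset.map_map]
  conv_rhs => rw [← Multiset.map_id t]
  refine Multiset.map_congr rfl fun r hr => ?_
  rw [← h r hr]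
  exact Fin.insertNth_self_removeNth j r

lemma xorSum_insertNth {n : ℕ} (j : Fin (n + 1)) (b : ZMod 2) (r : Fin n → ZMod 2) :
    xorSum (j.insertNth b r) = b + xorSum r := by
  simp [xorSum, Fin.sum_univ_succAbove _ j]

lemma card_filter_xorSum_map {M N : ℕ} {f : (Fin M → ZMod 2) → Fin N → ZMod 2} {b : ZMod 2}
    (hf : ∀ r, xorSum (f r) = b + xorSum r) (t : Multiset (Fin M → ZMod 2)) (c : ZMod 2) :
    ((t.map f).filter (fun r => xorSum r = c)).card =
      (t.filter (fun r => xorSum r = c - b)).card := by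
  rw [Multiset.filter_map, Multiset.card_map]
  congr 1
  refine Multiset.filter_congr fun r _ => ?_
  simp only [Function.comp_apply, hf, eq_sub_iff_add_eq']

lemma safeB_zero_map_iff {M N : ℕ} {f : (Fin M → ZMod 2) → Fin N → ZMod 2} {b : ZMod 2}
    (hf : ∀ r, xorSum (f r) = b + xorSum r) (t : Multiset (Fin M → ZMod 2)) :
    safeB 0 (t.map f) ↔ safeB 0 t := by
  simp only [safeB, card_filter_xorSum_map hf]
  obtain rfl | rfl := (by decide : ∀ x : ZMod 2, x = 0 ∨ x = 1) b
  · simp only [sub_zero]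
  · rw [show (0 : ZMod 2) - 1 = 1 from rfl, sub_self]
    exact eq_comm

/-- the full join respects deletion of a commonly-fixed column,
and base safety is preserved by this deletion. -/
theorem fullJoin_delete_fixed_column (n : ℕ)
    (t1 t2 : Multiset (Fin (n + 1) → ZMod 2)) (j : Fin (n + 1)) (b : ZMod 2)
    (h1 : ∀ r ∈ t1, r j = b) (h2 : ∀ r ∈ t2, r j = b) :
    fullJoin t1 t2 =
      (fullJoin (t1.map (deleteCol j)) (t2.map (deleteCol j))).map
        (fun r => j.insertNth b r) ∧
    (safeB 0 (fullJoin t1 t2) ↔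
      safeB 0 (fullJoin (t1.map (deleteCol j)) (t2.map (deleteCol j)))) := by
  have hjoin : fullJoin t1 t2 =
      (fullJoin (t1.map (deleteCol j)) (t2.map (deleteCol j))).map
        (fun r => j.insertNth b r) := by
    rw [← fullJoin_map_of_injective
        (Fin.insertNth_right_injective (α := fun _ => ZMod 2) (p := j) b),
      map_insertNth_map_deleteCol j b t1 h1, map_insertNth_map_deleteCol j b t2 h2]
  exact ⟨hjoin, hjoin ▸ safeB_zero_map_iff (xorSum_insertNth j b) _⟩
end

section
/- Main composition counting theorem (sequential composition of tables): let n = m1 + m2 with m1, m2 > 0. Let t1 be a table whose last n+1 columns we call outputs, which is (x, n+1)-deterministic and (x, m1, n+1)-safe, and let t2 be a table whose first n+1 columns we call inputs, which is (1, n+1)-deterministic and (1, m2, n+1)-safe. Then the join t1 ⋈_{n+1} t2 (matching t1's last n+1 columns with t2's first n+1 columns) is (x, 0, n+1)-safe: for all secret vectors b, b' ∈ {0,1}^x, the numbers of rows of the joined table whose first x blocks of n+1 entries XOR-sum to b and to b' respectively are equal. -/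
/-!
Let `A_b(w)` be the number of rows of the `b`-restriction of `t1` with output block `w`, and
`B(w)` the number of rows of `t2` with input block `w`; the `b`-restriction of the join has
`∑_w A_b(w) B(w)` rows. By Fourier inversion on `(ZMod 2)^(n+1)` this equals
`2^-(n+1) ∑_S Â_b(S) B̂(S)`, summed over the Walsh characters `S ⊆ Fin (n+1)`.
If `|S| ≤ m1`, then `Â_b(S)` does not depend on `b`: splitting `t1` on the output columns in `S`
costs `|S|` reductions, and what remains is still `(x,0)`-safe. If `|S| > m1`, then `S` misses fewer
than `m2` input columns, and `B̂(S) = 0`: after splitting `t2` on the missing columns, the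
characters become the parity of the whole input block, which is balanced by `(1,0)`-safety.
-/

section Walsh

open Finset

variable {κ : Type*}

lemma neg_one_pow_val_add (a b : ZMod 2) :
    (-1 : ℤ) ^ (a + b).val = (-1) ^ a.val * (-1) ^ b.val := by
  revert a b; decide

def walsh (S : Finset κ) (w : κ → ZMod 2) : ℤ := ∏ j ∈ S, (-1) ^ (w j).val

lemma walsh_eq_neg_one_pow_sum [DecidableEq κ] (S : Finset κ) (w : κ → ZMod 2) :
    walsh S w = (-1) ^ (∑ j ∈ S, w j).val := by
  induction S using Finset.induction_on with
  | empty => simp [walsh]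
  | insert j S hj ih =>
    rw [walsh, prod_insert hj, ← walsh, ih, sum_insert hj, neg_one_pow_val_add]

lemma sum_walsh_mul_walsh [Fintype κ] [DecidableEq κ] (w w' : κ → ZMod 2) :
    ∑ S : Finset κ, walsh S w * walsh S w' = if w = w' then 2 ^ Fintype.card κ else 0 := by
  have hprod (S : Finset κ) :
      walsh S w * walsh S w' = ∏ j ∈ S, (-1 : ℤ) ^ (w j + w' j).val := by
    simp only [walsh, ← prod_mul_distrib, neg_one_pow_val_add]
  simp_rw [hprod, ← powerset_univ, ← prod_one_add]
  split_ifs with h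
  · subst h
    have two (a : ZMod 2) : 1 + (-1 : ℤ) ^ (a + a).val = 2 := by revert a; decide
    simp [two]
  · obtain ⟨j, hj⟩ := Function.ne_iff.mp h
    have zero {a b : ZMod 2} (hab : a ≠ b) : 1 + (-1 : ℤ) ^ (a + b).val = 0 := by
      revert a b; decide
    exact prod_eq_zero (mem_univ j) (zero hj)

/-- Fourier inversion on `(ZMod 2)^κ`. -/
lemma two_pow_card_mul_count_eq_sum_walsh [Fintype κ] [DecidableEq κ]
    (s : Multiset (κ → ZMod 2)) (w : κ → ZMod 2) :
    2 ^ Fintype.card κ * (s.count w : ℤ)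
      = ∑ S : Finset κ, walsh S w * (s.map (walsh S)).sum := by
  simp_rw [← Multiset.sum_map_mul_left, ← Multiset.sum_map_sum, sum_walsh_mul_walsh]
  rw [Multiset.sum_map_eq_nsmul_single w (fun w' hw' _ => if_neg hw'.symm), if_pos rfl,
    nsmul_eq_mul, mul_comm]

end Walsh

section WalshSum

variable {α κ : Type*}

/-- Up to normalisation, the Fourier coefficient at `S` of the counting function of the
projection of `t` to the columns `ι`. -/
def walshSum (S : Finset κ) (ι : κ → α) (t : Multiset (α → ZMod 2)) : ℤ :=
  (t.map fun r => walsh S (r ∘ ι)).sum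

lemma walshSum_add (S : Finset κ) (ι : κ → α) (s t : Multiset (α → ZMod 2)) :
    walshSum S ι (s + t) = walshSum S ι s + walshSum S ι t := by
  simp [walshSum]

lemma walshSum_empty (ι : κ → α) (t : Multiset (α → ZMod 2)) :
    walshSum ∅ ι t = t.card := by
  simp [walshSum, walsh]

lemma walshSum_insert_of_forall_eq [DecidableEq κ] {S : Finset κ} {j : κ} (hj : j ∉ S)
    (ι : κ → α) {t : Multiset (α → ZMod 2)} {c : ZMod 2} (ht : ∀ r ∈ t, r (ι j) = c) :
    walshSum (insert j S) ι t = (-1) ^ c.val * walshSum S ι t := by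
  rw [walshSum, walshSum, ← Multiset.sum_map_mul_left]
  refine congrArg Multiset.sum (Multiset.map_congr rfl fun r hr => ?_)
  rw [walsh, Finset.prod_insert hj, Function.comp_apply, ht r hr, walsh]

lemma sum_map_neg_one_pow_val (t : Multiset α) (f : α → ZMod 2) :
    (t.map fun r => (-1 : ℤ) ^ (f r).val).sum
      = (t.filter (f · = 0)).card - (t.filter (f · = 1)).card := by
  induction t using Multiset.induction_on with
  | empty => simp
  | cons r t ih =>
    simp only [Multiset.map_cons, Multiset.sum_cons, ih, Multiset.filter_cons]
    generalize f r = a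
    obtain rfl | rfl : a = 0 ∨ a = 1 := by revert a; decide
    · simp; ring
    · simp [show (-1 : ℤ) ^ (1 : ZMod 2).val = -1 from rfl]; ring

end WalshSum

section Safety

variable {N x ℓ : ℕ} (hN : x * ℓ ≤ N)

lemma reduce_add (j : Fin N) (c : ZMod 2) (s t : Multiset (Fin N → ZMod 2)) :
    reduce j c (s + t) = reduce j c s + reduce j c t :=
  Multiset.filter_add _ s t

lemma reduce_zero_add_reduce_one (j : Fin N) (t : Multiset (Fin N → ZMod 2)) :
    reduce j 0 t + reduce j 1 t = t := by
  have hone : reduce j 1 t = t.filter (fun r => ¬ r j = 0) :=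
    Multiset.filter_congr fun r _ => by generalize r j = a; revert a; decide
  rw [reduce, hone, Multiset.filter_add_not]

lemma restrict_add (b : Fin x → ZMod 2) (s t : Multiset (Fin N → ZMod 2)) :
    restrict hN b (s + t) = restrict hN b s + restrict hN b t :=
  Multiset.filter_add _ s t

lemma apply_eq_of_mem_restrict_reduce {b : Fin x → ZMod 2} {j : Fin N} {c : ZMod 2}
    {t : Multiset (Fin N → ZMod 2)} {r : Fin N → ZMod 2}
    (hr : r ∈ restrict hN b (reduce j c t)) :
    r j = c :=
  (Multiset.mem_filter.mp (Multiset.mem_of_mem_filter hr)).2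

lemma safe_add {m : ℕ} {s t : Multiset (Fin N → ZMod 2)} (hs : safe hN m s) (ht : safe hN m t) :
    safe hN m (s + t) := by
  induction m generalizing s t with
  | zero => intro b b'; simp only [restrict_add, Multiset.card_add, hs b b', ht b b']
  | succ m ih => intro j c; rw [reduce_add]; exact ih (hs j c) (ht j c)

lemma safe_of_safe_succ [NeZero N] {m : ℕ} {t : Multiset (Fin N → ZMod 2)}
    (ht : safe hN (m + 1) t) : safe hN m t := by
  rw [← reduce_zero_add_reduce_one 0 t]
  exact safe_add hN (ht 0 0) (ht 0 1)

/-- Splitting on each column of `S` uses up one reduction; once `S` is exhausted, the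
remaining safety says that the `b`-restrictions are equinumerous. -/
lemma walshSum_restrict_eq_of_safe [NeZero N] {κ : Type*} [DecidableEq κ] (ι : κ → Fin N)
    {m : ℕ} {t : Multiset (Fin N → ZMod 2)} (ht : safe hN m t)
    {S : Finset κ} (hS : S.card ≤ m)
    (b b' : Fin x → ZMod 2) :
    walshSum S ι (restrict hN b t) = walshSum S ι (restrict hN b' t) := by
  induction m generalizing t S with
  | zero =>
    rw [Finset.card_eq_zero.mp (Nat.le_zero.mp hS), walshSum_empty, walshSum_empty]
    exact_mod_cast ht b b'
  | succ m ih =>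
    rcases hS.lt_or_eq with hS | hS
    · exact ih (safe_of_safe_succ hN ht) (by omega)
    obtain ⟨j, hj⟩ := Finset.card_pos.mp (by omega : 0 < S.card)
    have hS' : (S.erase j).card ≤ m := by rw [Finset.card_erase_of_mem hj]; omega
    have hsplit (c : ZMod 2) (b : Fin x → ZMod 2) :
        walshSum (insert j (S.erase j)) ι (restrict hN b (reduce (ι j) c t))
          = (-1) ^ c.val * walshSum (S.erase j) ι (restrict hN b (reduce (ι j) c t)) :=
      walshSum_insert_of_forall_eq (Finset.notMem_erase j S) ι
        fun _ hr => apply_eq_of_mem_restrict_reduce hN hr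
    rw [← Finset.insert_erase hj, ← reduce_zero_add_reduce_one (ι j) t]
    simp only [restrict_add, walshSum_add, hsplit]
    rw [ih (ht (ι j) 0) hS', ih (ht (ι j) 1) hS']

end Safety

section SingleBlock

variable {N ℓ : ℕ} (h : 1 * ℓ ≤ N)

lemma blockIdx_zero (h' : ℓ ≤ N) : blockIdx h 0 = Fin.castLE h' := by
  ext j; simp [blockIdx]

lemma walshSum_univ_eq_zero_of_safe_zero {t : Multiset (Fin N → ZMod 2)} (ht : safe h 0 t) :
    walshSum Finset.univ (blockIdx h 0) t = 0 := by
  have hsum : walshSum Finset.univ (blockIdx h 0) t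
      = (t.map fun r => (-1) ^ (blockSum h 0 r).val).sum :=
    congrArg Multiset.sum (Multiset.map_congr rfl fun r _ => walsh_eq_neg_one_pow_sum _ _)
  have hcard := ht (fun _ => 0) (fun _ => 1)
  simp only [restrict, Fin.forall_fin_one] at hcard
  rw [hsum, sum_map_neg_one_pow_val, hcard, sub_self]

/-- Dually, each column outside `S` that is split on joins `S`; once `S` covers the whole
input block, the Walsh sum is a difference of equinumerous parity classes. -/
lemma walshSum_eq_zero_of_safe [NeZero N] {m : ℕ} {t : Multiset (Fin N → ZMod 2)}
    (ht : safe h m t) {S : Finset (Fin ℓ)} (hS : ℓ ≤ S.card + m) :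
    walshSum S (blockIdx h 0) t = 0 := by
  induction m generalizing t S with
  | zero =>
    rw [Finset.eq_univ_of_card S (le_antisymm (Finset.card_le_univ S) (by simpa using hS))]
    exact walshSum_univ_eq_zero_of_safe_zero h ht
  | succ m ih =>
    by_cases hSu : S = Finset.univ
    · subst hSu
      exact ih (safe_of_safe_succ h ht) (by simp)
    obtain ⟨j, hj⟩ := not_forall.mp (mt Finset.eq_univ_iff_forall.mpr hSu)
    have hS' : ℓ ≤ (insert j S).card + m := by rw [Finset.card_insert_of_notMem hj]; omega
    have hzero (c : ZMod 2) : walshSum S (blockIdx h 0) (reduce (blockIdx h 0 j) c t) = 0 := by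
      have hins := walshSum_insert_of_forall_eq hj (blockIdx h 0)
        (t := reduce (blockIdx h 0 j) c t) (c := c) fun _ hr => (Multiset.mem_filter.mp hr).2
      rw [ih (ht _ c) hS'] at hins
      simpa using hins.symm
    rw [← reduce_zero_add_reduce_one (blockIdx h 0 j) t, walshSum_add, hzero, hzero, add_zero]

end SingleBlock

lemma Multiset.card_filter_eq_sum_count {α : Type*} [Fintype α] [DecidableEq α]
    (t : Multiset α) (p : α → Prop) [DecidablePred p] :
    (t.filter p).card = ∑ a with p a, t.count a := by
  rw [← Multiset.sum_count_eq_card (s := Finset.univ) (fun _ _ => Finset.mem_univ _),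
    Finset.sum_filter]
  exact Finset.sum_congr rfl fun a _ => Multiset.count_filter

lemma Multiset.sum_map_eq_sum_count {α M : Type*} [Fintype α] [DecidableEq α] [AddCommMonoid M]
    (t : Multiset α) (f : α → M) :
    (t.map f).sum = ∑ a, t.count a • f a := by
  rw [Finset.sum_multiset_map_count]
  exact Finset.sum_subset (Finset.subset_univ _) fun a _ ha => by
    rw [Multiset.count_eq_zero_of_notMem (by simpa using ha), zero_smul]

section Join

variable {c1 c2 L : ℕ}

def lastCols (h1 : L ≤ c1) : Fin L → Fin c1 := fun j => ⟨c1 - L + j, by omega⟩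

def joinLeft (h2 : L ≤ c2) (v : Fin (c1 + c2 - L) → ZMod 2) : Fin c1 → ZMod 2 :=
  fun i => v ⟨i, by omega⟩

def joinRight (h1 : L ≤ c1) (v : Fin (c1 + c2 - L) → ZMod 2) : Fin c2 → ZMod 2 :=
  fun i => v ⟨c1 - L + i, by omega⟩

def joinGlue (h1 : L ≤ c1) (u1 : Fin c1 → ZMod 2) (u2 : Fin c2 → ZMod 2) :
    Fin (c1 + c2 - L) → ZMod 2 :=
  fun k => if hk : k.1 < c1 then u1 ⟨k, hk⟩ else u2 ⟨k - (c1 - L), by omega⟩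

variable (h1 : L ≤ c1) (h2 : L ≤ c2)

lemma count_join (t1 : Multiset (Fin c1 → ZMod 2)) (t2 : Multiset (Fin c2 → ZMod 2))
    (v : Fin (c1 + c2 - L) → ZMod 2) :
    (join h1 h2 t1 t2).count v = t1.count (joinLeft h2 v) * t2.count (joinRight h1 v) := by
  simp only [join, Multiset.count_sum', Multiset.count_replicate, Finset.sum_ite_eq',
    Finset.mem_univ, if_true]
  rfl

/-- `joinRight` is a bijection from the rows `v` with `joinLeft v = u1` onto the rows whose first
`L` entries agree with the last `L` entries of `u1`; its inverse is `joinGlue u1`. -/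
lemma sum_count_joinRight (t2 : Multiset (Fin c2 → ZMod 2)) (u1 : Fin c1 → ZMod 2) :
    ∑ v with joinLeft h2 v = u1, t2.count (joinRight h1 v)
      = (t2.map (· ∘ Fin.castLE h2)).count (u1 ∘ lastCols h1) := by
  rw [Multiset.count_map, Multiset.card_filter_eq_sum_count]
  refine Finset.sum_nbij' (joinRight h1) (joinGlue h1 u1) ?_ ?_ ?_ ?_ fun _ _ => rfl
  · intro v hv
    simp only [Finset.mem_filter, Finset.mem_univ, true_and] at hv ⊢
    subst hv
    rfl
  · intro u2 hu2
    simp only [Finset.mem_filter, Finset.mem_univ, true_and]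
    funext i
    simp [joinLeft, joinGlue]
  · intro v hv
    simp only [Finset.mem_filter, Finset.mem_univ, true_and] at hv
    subst hv
    funext k
    by_cases hk : k.1 < c1
    · simp [joinGlue, joinLeft, hk]
    · simp only [joinGlue, joinRight, hk, dite_false]
      exact congrArg v (Fin.ext (by simp only; omega))
  · intro u2 hu2
    simp only [Finset.mem_filter, Finset.mem_univ, true_and] at hu2
    funext i
    by_cases hi : c1 - L + i.1 < c1
    · simp only [joinRight, joinGlue, hi, dite_true]
      exact (congrFun hu2 ⟨i, by omega⟩).trans (congrArg u2 (Fin.ext rfl))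
    · simp [joinRight, joinGlue, hi]

lemma card_filter_join (p : (Fin c1 → ZMod 2) → Prop) [DecidablePred p]
    (t1 : Multiset (Fin c1 → ZMod 2)) (t2 : Multiset (Fin c2 → ZMod 2)) :
    ((join h1 h2 t1 t2).filter (fun v => p (joinLeft h2 v))).card
      = ((t1.filter p).map fun r =>
          (t2.map (· ∘ Fin.castLE h2)).count (r ∘ lastCols h1)).sum := by
  rw [Multiset.card_filter_eq_sum_count, Finset.sum_filter, Multiset.sum_map_eq_sum_count,
    ← Finset.sum_fiberwise _ (joinLeft h2)]
  refine Finset.sum_congr rfl fun u1 _ => ?_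
  rw [Multiset.count_filter, ← sum_count_joinRight h1 h2,
    Finset.sum_congr rfl fun v hv => by rw [count_join, (Finset.mem_filter.mp hv).2]]
  by_cases hp : p u1 <;> simp [hp, Finset.mul_sum]

end Join

lemma two_pow_mul_card_restrict_join {c1 c2 L x ℓ : ℕ} (h1 : L ≤ c1) (h2 : L ≤ c2)
    (hb : x * ℓ ≤ c1) (hJ : x * ℓ ≤ c1 + c2 - L) (b : Fin x → ZMod 2)
    (t1 : Multiset (Fin c1 → ZMod 2)) (t2 : Multiset (Fin c2 → ZMod 2)) :
    2 ^ L * ((restrict hJ b (join h1 h2 t1 t2)).card : ℤ)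
      = ∑ S : Finset (Fin L),
          walshSum S (Fin.castLE h2) t2 * walshSum S (lastCols h1) (restrict hb b t1) := by
  have hcard := card_filter_join h1 h2 (fun u => ∀ i, blockSum hb i u = b i) t1 t2
  change (restrict hJ b (join h1 h2 t1 t2)).card = ((restrict hb b t1).map _).sum at hcard
  have hinv := two_pow_card_mul_count_eq_sum_walsh (t2.map (· ∘ Fin.castLE h2))
  rw [Fintype.card_fin] at hinv
  rw [hcard, Nat.cast_multiset_sum, Multiset.map_map, ← Multiset.sum_map_mul_left]
  simp only [Function.comp_apply, hinv, Multiset.sum_map_sum]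
  refine Finset.sum_congr rfl fun S _ => ?_
  rw [walshSum, walshSum, Multiset.map_map, ← Multiset.sum_map_mul_left]
  simp only [Function.comp_def, mul_comm]

/-- main sequential-composition counting theorem. If t1 (with x
secret blocks of size n+1 and last n+1 output columns) is deterministic and
(x,m1,n+1)-safe, and t2 (whose first n+1 columns are its input) is deterministic
and (1,m2,n+1)-safe, with n = m1 + m2, m1, m2 > 0, then their join matching t1's
outputs with t2's inputs is (x,0,n+1)-safe. -/
theorem sequential_composition_safe
    {x n m1 m2 N1 N2 : ℕ} (hn : n = m1 + m2)
    (hN1 : x * (n + 1) ≤ N1) (hout1 : n + 1 ≤ N1) (hN2 : n + 1 ≤ N2)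
    (t1 : Multiset (Fin N1 → ZMod 2)) (t2 : Multiset (Fin N2 → ZMod 2))
    (hsafe1 : safe hN1 m1 t1)
    (hsafe2 : safe (show 1 * (n + 1) ≤ N2 by omega) m2 t2) :
    safe (show x * (n + 1) ≤ N1 + N2 - (n + 1) from
        le_trans hN1 (by omega)) 0 (join hout1 hN2 t1 t2) := by
  intro b b'
  have : NeZero N1 := ⟨by omega⟩
  have : NeZero N2 := ⟨by omega⟩
  suffices h : (2 ^ (n + 1) * (restrict _ b (join hout1 hN2 t1 t2)).card : ℤ)
      = 2 ^ (n + 1) * (restrict _ b' (join hout1 hN2 t1 t2)).card by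
    exact_mod_cast mul_left_cancel₀ (by positivity) h
  rw [two_pow_mul_card_restrict_join hout1 hN2 hN1, two_pow_mul_card_restrict_join hout1 hN2 hN1]
  refine Finset.sum_congr rfl fun S _ => ?_
  rcases le_or_gt S.card m1 with hS | hS
  · rw [walshSum_restrict_eq_of_safe hN1 _ hsafe1 hS b b']
  · rw [← blockIdx_zero (by omega), walshSum_eq_zero_of_safe _ hsafe2 (by omega), zero_mul,
      zero_mul]
end
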